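/- For any quantum channel Λ on a d-dimensional Hilbert space with Kraus operators {A_k} (so Λ(ρ) = Σ_k A_k ρ A_k†), the operator N = Σ_k A_k ⊗ A_k† satisfies ‖N‖₂ ≤ d, where ‖·‖₂ is the Frobenius (Hilbert–Schmidt) norm. -/

import Mathlib

/-!
Vectorising matrices turns the Frobenius norm into a Euclidean norm, with
`⟪vec A, vec B⟫ = Tr (Aᴴ B)`. Since the trace is multiplicative on Kronecker products,
`‖N‖₂² = ∑ₖₗ |Tr (A_kᴴ A_l)|²`, which Cauchy–Schwarz bounds by
`(∑ₖ ‖A_k‖₂²)² = (Tr ∑ₖ A_kᴴ A_k)² = (Tr 1)² = d²`.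
-/

open Matrix Kronecker

/-- Frobenius (Hilbert–Schmidt) norm of a complex matrix. -/
noncomputable def frobNorm {n : Type*} [Fintype n] (M : Matrix n n ℂ) : ℝ :=
  Real.sqrt (∑ i, ∑ j, ‖M i j‖ ^ 2)

theorem Finset.sum_sum_norm_inner_sq_le {𝕜 E ι : Type*} [RCLike 𝕜]
    [NormedAddCommGroup E] [InnerProductSpace 𝕜 E] (s : Finset ι) (v : ι → E) :
    ∑ k ∈ s, ∑ l ∈ s, ‖inner 𝕜 (v k) (v l)‖ ^ 2 ≤ (∑ k ∈ s, ‖v k‖ ^ 2) ^ 2 := by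
  rw [sq (∑ k ∈ s, _), Finset.sum_mul_sum]
  gcongr with k _ l _
  rw [← mul_pow]
  gcongr
  exact norm_inner_le_norm _ _

namespace Matrix

variable {𝕜 ι l m n p : Type*} [RCLike 𝕜] [Fintype ι] [Fintype m] [Fintype n]

theorem trace_conjTranspose_sum_kronecker_mul_self [Fintype l] [Fintype p]
    (A : ι → Matrix l m 𝕜) (B : ι → Matrix n p 𝕜) :
    ((∑ k, A k ⊗ₖ B k)ᴴ * ∑ k, A k ⊗ₖ B k).trace =
      ∑ k, ∑ k', ((A k)ᴴ * A k').trace * ((B k)ᴴ * B k').trace := by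
  simp only [conjTranspose_sum, conjTranspose_kronecker, Matrix.sum_mul, Matrix.mul_sum,
    trace_sum, ← mul_kronecker_mul, trace_kronecker]
  exact Finset.sum_comm

noncomputable def vecL2 (A : Matrix m n 𝕜) : EuclideanSpace 𝕜 (n × m) :=
  WithLp.toLp 2 A.vec

theorem inner_vecL2 (A B : Matrix m n 𝕜) :
    inner 𝕜 (vecL2 A) (vecL2 B) = (Aᴴ * B).trace := by
  rw [vecL2, vecL2, EuclideanSpace.inner_toLp_toLp, dotProduct_comm, star_vec_dotProduct_vec]

theorem norm_vecL2_sq (A : Matrix m n 𝕜) : ‖vecL2 A‖ ^ 2 = RCLike.re (Aᴴ * A).trace := by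
  rw [← inner_vecL2, inner_self_eq_norm_sq]

theorem norm_vecL2_sum_kronecker_conjTranspose_sq (A : ι → Matrix m n 𝕜) :
    ‖vecL2 (∑ k, A k ⊗ₖ (A k)ᴴ)‖ ^ 2 =
      ∑ k, ∑ k', ‖inner 𝕜 (vecL2 (A k)) (vecL2 (A k'))‖ ^ 2 := by
  rw [norm_vecL2_sq, trace_conjTranspose_sum_kronecker_mul_self, map_sum]
  refine Finset.sum_congr rfl fun k _ => ?_
  rw [map_sum]
  refine Finset.sum_congr rfl fun k' _ => ?_
  have hconj : ((A k)ᴴᴴ * (A k')ᴴ).trace =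
      starRingEnd 𝕜 (inner 𝕜 (vecL2 (A k)) (vecL2 (A k'))) := by
    rw [inner_vecL2, conjTranspose_conjTranspose, trace_mul_comm, starRingEnd_apply,
      ← trace_conjTranspose, conjTranspose_mul, conjTranspose_conjTranspose]
  rw [← inner_vecL2, hconj, RCLike.mul_conj, ← RCLike.ofReal_pow, RCLike.ofReal_re]

end Matrix

theorem frobNorm_eq_norm_vecL2 {n : Type*} [Fintype n] (M : Matrix n n ℂ) :
    frobNorm M = ‖vecL2 M‖ := by
  rw [frobNorm, EuclideanSpace.norm_eq, Fintype.sum_prod_type, Finset.sum_comm]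
  rfl

/-- For a quantum channel `Λ(ρ) = ∑ k, A k * ρ * (A k)ᴴ` on a `d`-dimensional space
(so `∑ k, (A k)ᴴ * A k = 1`), the operator `N = ∑ k, A k ⊗ (A k)ᴴ` satisfies
`‖N‖₂ ≤ d`. -/
theorem frobNorm_sum_kronecker_le {d : ℕ} {ι : Type*} [Fintype ι]
    (A : ι → Matrix (Fin d) (Fin d) ℂ)
    (hKraus : ∑ k, (A k)ᴴ * A k = (1 : Matrix (Fin d) (Fin d) ℂ)) :
    frobNorm (∑ k, (A k) ⊗ₖ (A k)ᴴ) ≤ (d : ℝ) := by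
  have hsum : ∑ k, ‖vecL2 (A k)‖ ^ 2 = d := by
    simp only [norm_vecL2_sq, ← map_sum, ← trace_sum, hKraus, trace_one, Fintype.card_fin]
    exact Complex.natCast_re d
  rw [frobNorm_eq_norm_vecL2, ← sq_le_sq₀ (norm_nonneg _) d.cast_nonneg,
    norm_vecL2_sum_kronecker_conjTranspose_sq, ← hsum]
  exact Finset.univ.sum_sum_norm_inner_sq_le _
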